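/- arXiv:2211.11303 — 2 statements merged into one kernel-verified Lean document; each statement's English description precedes it below -/
import Mathlib

section
/- The truncated SVD of rank r is a best rank-r approximation in the operator 2-norm: if A = U S Vᴴ is a singular value decomposition of A ∈ ℂ^{m×n} with singular values s₁ ≥ s₂ ≥ … and A_r = U_r S_r V_rᴴ is the truncation to the first r singular triples, then ‖A − A_r‖₂ = s_{r+1}. -/
open scoped ComplexOrder

/-- The operator 2-norm (spectral norm) of a rectangular complex matrix. -/
noncomputable def opNorm2 {m n : ℕ} (M : Matrix (Fin m) (Fin n) ℂ) : ℝ :=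
  ‖LinearMap.toContinuousLinearMap (Matrix.toEuclideanLin M)‖

open scoped Matrix.Norms.L2Operator Matrix

lemma opNorm2_eq_l2 {m n : ℕ} (M : Matrix (Fin m) (Fin n) ℂ) : opNorm2 M = ‖M‖ := rfl

lemma norm_one_mat (m : ℕ) (hm : 0 < m) : ‖(1 : Matrix (Fin m) (Fin m) ℂ)‖ = 1 := by
  haveI : Nonempty (Fin m) := ⟨⟨0, hm⟩⟩
  rw [Matrix.cstar_norm_def, map_one]
  exact ContinuousLinearMap.norm_id

lemma norm_unitary {m : ℕ} (hm : 0 < m) (U : Matrix (Fin m) (Fin m) ℂ)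
    (hU : U ∈ Matrix.unitaryGroup (Fin m) ℂ) : ‖U‖ = 1 := by
  have h1 : Uᴴ * U = 1 := by
    simpa [Matrix.star_eq_conjTranspose] using hU.1
  have h2 := Matrix.l2_opNorm_conjTranspose_mul_self U
  rw [h1, norm_one_mat m hm] at h2
  rcases mul_self_eq_one_iff.mp h2.symm with h | h
  · exact h
  · have := norm_nonneg U; linarith

lemma norm_unitary_mul {m n : ℕ} (hm : 0 < m) (U : Matrix (Fin m) (Fin m) ℂ)
    (hU : U ∈ Matrix.unitaryGroup (Fin m) ℂ) (M : Matrix (Fin m) (Fin n) ℂ) :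
    ‖U * M‖ = ‖M‖ := by
  have hUn := norm_unitary hm U hU
  have hUHn : ‖Uᴴ‖ = 1 := by rw [Matrix.l2_opNorm_conjTranspose]; exact hUn
  have h1 : Uᴴ * U = 1 := by simpa [Matrix.star_eq_conjTranspose] using hU.1
  apply le_antisymm
  · calc ‖U * M‖ ≤ ‖U‖ * ‖M‖ := Matrix.l2_opNorm_mul U M
      _ = ‖M‖ := by rw [hUn, one_mul]
  · have hM : M = Uᴴ * (U * M) := by rw [← Matrix.mul_assoc, h1, Matrix.one_mul]
    calc ‖M‖ = ‖Uᴴ * (U * M)‖ := by rw [← hM]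
      _ ≤ ‖Uᴴ‖ * ‖U * M‖ := Matrix.l2_opNorm_mul _ _
      _ = ‖U * M‖ := by rw [hUHn, one_mul]

lemma norm_mul_conj_unitary {m n : ℕ} (hn : 0 < n) (V : Matrix (Fin n) (Fin n) ℂ)
    (hV : V ∈ Matrix.unitaryGroup (Fin n) ℂ) (M : Matrix (Fin m) (Fin n) ℂ) :
    ‖M * Vᴴ‖ = ‖M‖ := by
  have hVn := norm_unitary hn V hV
  have hVHn : ‖Vᴴ‖ = 1 := by rw [Matrix.l2_opNorm_conjTranspose]; exact hVn
  have h1 : Vᴴ * V = 1 := by simpa [Matrix.star_eq_conjTranspose] using hV.1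
  apply le_antisymm
  · calc ‖M * Vᴴ‖ ≤ ‖M‖ * ‖Vᴴ‖ := Matrix.l2_opNorm_mul M Vᴴ
      _ = ‖M‖ := by rw [hVHn, mul_one]
  · have hM : M = (M * Vᴴ) * V := by rw [Matrix.mul_assoc, h1, Matrix.mul_one]
    calc ‖M‖ = ‖(M * Vᴴ) * V‖ := by rw [← hM]
      _ ≤ ‖M * Vᴴ‖ * ‖V‖ := Matrix.l2_opNorm_mul _ _
      _ = ‖M * Vᴴ‖ := by rw [hVn, mul_one]

lemma opNorm2_diag {m n r : ℕ} (hm : r < m) (hn : r < n) (s : ℕ → ℝ)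
    (hs0 : ∀ i, 0 ≤ s i) (hmono : ∀ i j, i ≤ j → s j ≤ s i)
    (D : Matrix (Fin m) (Fin n) ℂ)
    (hD : ∀ i j, D i j = if (i : ℕ) = (j : ℕ) ∧ r ≤ (i : ℕ) then (s (i : ℕ) : ℂ) else 0) :
    opNorm2 D = s r := by
  -- mulVec formula
  have hmv : ∀ (y : Fin n → ℂ) (i : Fin m), (D *ᵥ y) i =
      if h : (i : ℕ) < n ∧ r ≤ (i : ℕ) then (s (i : ℕ) : ℂ) * y ⟨(i : ℕ), h.1⟩ else 0 := by
    intro y i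
    by_cases h : (i : ℕ) < n ∧ r ≤ (i : ℕ)
    · rw [dif_pos h]
      rw [Matrix.mulVec, dotProduct]
      rw [Finset.sum_eq_single (⟨(i : ℕ), h.1⟩ : Fin n)]
      · rw [hD]; simp [h.2]
      · intro j _ hj
        rw [hD, if_neg, zero_mul]
        rintro ⟨hij, -⟩
        exact hj (by ext; simp [← hij])
      · simp
    · rw [dif_neg h]
      rw [Matrix.mulVec, dotProduct]
      apply Finset.sum_eq_zero
      intro j _
      rw [hD, if_neg, zero_mul]
      rintro ⟨hij, hri⟩
      exact h ⟨hij ▸ j.isLt, hri⟩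
  unfold opNorm2
  apply le_antisymm
  · apply ContinuousLinearMap.opNorm_le_bound _ (hs0 r)
    intro x
    set y : Fin n → ℂ := fun j => x j with hy
    have hLx : ∀ i : Fin m,
        (LinearMap.toContinuousLinearMap (Matrix.toEuclideanLin D) x) i = (D *ᵥ y) i :=
      fun i => rfl
    set F : ℕ → ℝ := fun k => if h : k < m then ‖(D *ᵥ y) ⟨k, h⟩‖ ^ 2 else 0 with hF
    set G : ℕ → ℝ := fun k => if h : k < n then ‖y ⟨k, h⟩‖ ^ 2 else 0 with hG
    have hGnn : ∀ k, 0 ≤ G k := by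
      intro k; rw [hG]; dsimp only; split <;> positivity
    have hFG : ∀ k, F k ≤ (s r) ^ 2 * G k := by
      intro k
      by_cases hk : k < m
      · rw [hF]; dsimp only; rw [dif_pos hk, hmv y ⟨k, hk⟩]
        by_cases h2 : k < n ∧ r ≤ k
        · rw [dif_pos h2]
          rw [hG]; dsimp only; rw [dif_pos h2.1]
          rw [norm_mul, mul_pow, Complex.norm_real, Real.norm_eq_abs,
            abs_of_nonneg (hs0 k)]
          have hsk : (s k) ^ 2 ≤ (s r) ^ 2 := pow_le_pow_left₀ (hs0 k) (hmono r k h2.2) 2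
          have : (0:ℝ) ≤ ‖y ⟨k, h2.1⟩‖ ^ 2 := by positivity
          nlinarith
        · rw [dif_neg h2]
          simpa using mul_nonneg (sq_nonneg (s r)) (hGnn k)
      · rw [hF]; dsimp only; rw [dif_neg hk]
        exact mul_nonneg (sq_nonneg (s r)) (hGnn k)
    have hnormLx : ‖LinearMap.toContinuousLinearMap (Matrix.toEuclideanLin D) x‖ =
        Real.sqrt (∑ k ∈ Finset.range m, F k) := by
      rw [EuclideanSpace.norm_eq]
      congr 1
      rw [← Fin.sum_univ_eq_sum_range F m]
      apply Finset.sum_congr rfl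
      intro i _
      rw [hLx i, hF]; dsimp only; rw [dif_pos i.isLt]
    have hnormx : ‖x‖ = Real.sqrt (∑ k ∈ Finset.range n, G k) := by
      rw [EuclideanSpace.norm_eq]
      congr 1
      rw [← Fin.sum_univ_eq_sum_range G n]
      apply Finset.sum_congr rfl
      intro j _
      rw [hG]; dsimp only; rw [dif_pos j.isLt]
    rw [hnormLx, hnormx]
    have key : (∑ k ∈ Finset.range m, F k) ≤ (s r) ^ 2 * ∑ k ∈ Finset.range n, G k := by
      rw [Finset.mul_sum]
      calc (∑ k ∈ Finset.range m, F k)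
          ≤ ∑ k ∈ Finset.range m, (s r) ^ 2 * G k :=
            Finset.sum_le_sum fun k _ => hFG k
        _ ≤ ∑ k ∈ Finset.range (max m n), (s r) ^ 2 * G k := by
            apply Finset.sum_le_sum_of_subset_of_nonneg
              (Finset.range_subset_range.mpr (le_max_left m n))
            intro k _ _
            exact mul_nonneg (sq_nonneg (s r)) (hGnn k)
        _ = ∑ k ∈ Finset.range n, (s r) ^ 2 * G k := by
            symm
            apply Finset.sum_subset (Finset.range_subset_range.mpr (le_max_right m n))
            intro k _ hk
            have hkn : ¬ k < n := by simpa using hk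
            rw [hG]; dsimp only; rw [dif_neg hkn, mul_zero]
    calc Real.sqrt (∑ k ∈ Finset.range m, F k)
        ≤ Real.sqrt ((s r) ^ 2 * ∑ k ∈ Finset.range n, G k) := Real.sqrt_le_sqrt key
      _ = s r * Real.sqrt (∑ k ∈ Finset.range n, G k) := by
          rw [Real.sqrt_mul (sq_nonneg (s r)), Real.sqrt_sq (hs0 r)]
  · -- lower bound: apply to e_r
    set x₀ : EuclideanSpace ℂ (Fin n) := EuclideanSpace.single ⟨r, hn⟩ (1 : ℂ) with hx₀
    have hnx₀ : ‖x₀‖ = 1 := by rw [hx₀, EuclideanSpace.norm_single]; simp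
    have hDx₀ : (LinearMap.toContinuousLinearMap (Matrix.toEuclideanLin D) x₀) =
        EuclideanSpace.single ⟨r, hm⟩ ((s r : ℂ)) := by
      apply PiLp.ext
      intro i
      have : (LinearMap.toContinuousLinearMap (Matrix.toEuclideanLin D) x₀) i =
          (D *ᵥ (fun j => x₀ j)) i := rfl
      rw [this, hmv]
      rw [EuclideanSpace.single_apply]
      by_cases hir : (i : ℕ) = r
      · have h : (i : ℕ) < n ∧ r ≤ (i : ℕ) := ⟨hir ▸ hn, hir.ge⟩
        rw [dif_pos h]
        have : x₀ ⟨(i : ℕ), h.1⟩ = 1 := by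
          rw [hx₀, EuclideanSpace.single_apply, if_pos (by ext; exact hir)]
        rw [this, mul_one, if_pos (by ext; exact hir), hir]
      · rw [if_neg (fun he => hir (by rw [he]))]
        by_cases h : (i : ℕ) < n ∧ r ≤ (i : ℕ)
        · rw [dif_pos h]
          have : x₀ ⟨(i : ℕ), h.1⟩ = 0 := by
            rw [hx₀, EuclideanSpace.single_apply, if_neg]
            intro he
            exact hir (by simpa using congrArg Fin.val he)
          rw [this, mul_zero]
        · rw [dif_neg h]
    have hle := (LinearMap.toContinuousLinearMap (Matrix.toEuclideanLin D)).le_opNorm x₀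
    rw [hDx₀, hnx₀, mul_one, EuclideanSpace.norm_single, Complex.norm_real,
      Real.norm_eq_abs, abs_of_nonneg (hs0 r)] at hle
    exact hle

/-- Truncated SVD is a best rank-`r` approximation in the operator 2-norm:
if `A = U S Vᴴ` is an SVD of `A ∈ ℂ^{m×n}` (with `U, V` unitary and `S` "diagonal" with
nonincreasing nonnegative entries `s₀ ≥ s₁ ≥ …`), and `Aᵣ = U Sᵣ Vᴴ` is the truncation
to the first `r` singular triples, then `‖A − Aᵣ‖₂ = s r` (the `(r+1)`-st singular value). -/
theorem truncated_svd_error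
    (m n r : ℕ) (hr : r < min m n)
    (A : Matrix (Fin m) (Fin n) ℂ)
    (U : Matrix (Fin m) (Fin m) ℂ) (V : Matrix (Fin n) (Fin n) ℂ)
    (hU : U ∈ Matrix.unitaryGroup (Fin m) ℂ)
    (hV : V ∈ Matrix.unitaryGroup (Fin n) ℂ)
    (s : ℕ → ℝ) (hs_nonneg : ∀ i, 0 ≤ s i) (hs_mono : ∀ i j, i ≤ j → s j ≤ s i)
    (S : Matrix (Fin m) (Fin n) ℂ)
    (hS : ∀ i j, S i j = if (i : ℕ) = (j : ℕ) then (s (i : ℕ) : ℂ) else 0)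
    (hA : A = U * S * V.conjTranspose)
    (Sr : Matrix (Fin m) (Fin n) ℂ)
    (hSr : ∀ i j, Sr i j =
      if (i : ℕ) = (j : ℕ) ∧ (i : ℕ) < r then (s (i : ℕ) : ℂ) else 0)
    (Ar : Matrix (Fin m) (Fin n) ℂ)
    (hAr : Ar = U * Sr * V.conjTranspose) :
    opNorm2 (A - Ar) = s r := by
  have hrm : r < m := lt_of_lt_of_le hr (min_le_left m n)
  have hrn : r < n := lt_of_lt_of_le hr (min_le_right m n)
  have hm : 0 < m := lt_of_le_of_lt (Nat.zero_le r) hrm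
  have hn : 0 < n := lt_of_le_of_lt (Nat.zero_le r) hrn
  have hsub : A - Ar = U * (S - Sr) * V.conjTranspose := by
    rw [hA, hAr, Matrix.mul_sub, Matrix.sub_mul]
  rw [opNorm2_eq_l2, hsub, Matrix.mul_assoc, norm_unitary_mul hm U hU,
    norm_mul_conj_unitary hn V hV, ← opNorm2_eq_l2]
  apply opNorm2_diag hrm hrn s hs_nonneg hs_mono
  intro i j
  rw [Matrix.sub_apply, hS, hSr]
  by_cases h1 : (i : ℕ) = (j : ℕ)
  · by_cases h2 : (i : ℕ) < r
    · rw [if_pos h1, if_pos ⟨h1, h2⟩, sub_self,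
        if_neg (fun h => absurd h.2 (Nat.not_le.mpr h2))]
    · rw [if_pos h1, if_neg (fun h => h2 h.2), sub_zero,
        if_pos ⟨h1, Nat.le_of_not_lt h2⟩]
  · rw [if_neg h1, if_neg (fun h => h1 h.1), sub_zero, if_neg (fun h => h1 h.1)]
end

section
/- A vector field of the form p(x) = a + b × x (a, b ∈ ℝ³) is uniquely determined on ℝ³ by the six values of the line integrals of its tangential components along the six edges of a non-degenerate tetrahedron: if all six edge integrals of p vanish, then p = 0. -/
open scoped Matrix

/-!
Along an edge `x + t d` the integrand `(a + b × (x + t d)) ⬝ d` does not depend on `t`, because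
`(b × d) ⬝ d = 0`; so the edge integral from `x` to `y` is `a ⬝ y - a ⬝ x + b ⬝ (x × y)`.
After moving `v₀` to the origin (which replaces `a` by `a + b × v₀`), the three edges at `v₀` say
that `a` is orthogonal to the edge vectors `uₖ = vₖ - v₀`, and the three remaining edges then say
that `b` is orthogonal to every `uᵢ × uⱼ`. The matrix with rows `u₁ × u₂, u₁ × u₃, u₂ × u₃` has
determinant `det(u)²`, which is nonzero for a non-degenerate tetrahedron, so `b = 0`, and then `a = 0`.
-/

theorem AffineIndependent.linearIndependent_succ_sub {k V : Type*} [Ring k] [AddCommGroup V]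
    [Module k V] {n : ℕ} {v : Fin (n + 1) → V} (hv : AffineIndependent k v) :
    LinearIndependent k (fun i : Fin n => v i.succ - v 0) :=
  ((affineIndependent_iff_linearIndependent_vsub k v 0).mp hv).comp
    (fun i => ⟨i.succ, i.succ_ne_zero⟩) fun _ _ h => Fin.succ_injective _ (congrArg Subtype.val h)

section CommRing

variable {R : Type*} [CommRing R]

theorem dotProduct_sub_of_add_cross (a b x y : Fin 3 → R) :
    (a + b ⨯₃ x) ⬝ᵥ (y - x) = a ⬝ᵥ y - a ⬝ᵥ x + b ⬝ᵥ (x ⨯₃ y) := by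
  rw [add_dotProduct, dotProduct_sub, dotProduct_sub, dotProduct_comm (b ⨯₃ x) x,
    dot_cross_self, dotProduct_comm (b ⨯₃ x) y, triple_product_permutation, sub_zero]

theorem det_of_cross_pairs (u : Fin 3 → Fin 3 → R) :
    (Matrix.of ![u 0 ⨯₃ u 1, u 0 ⨯₃ u 2, u 1 ⨯₃ u 2]).det = (Matrix.of u).det ^ 2 := by
  simp [Matrix.det_fin_three, cross_apply]
  ring

variable [IsDomain R]

theorem eq_zero_of_forall_dotProduct_cross_eq_zero {u : Fin 3 → Fin 3 → R}
    (hu : (Matrix.of u).det ≠ 0) {w : Fin 3 → R} (h : ∀ i j, w ⬝ᵥ (u i ⨯₃ u j) = 0) : w = 0 := by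
  refine Matrix.eq_zero_of_mulVec_eq_zero (M := Matrix.of ![u 0 ⨯₃ u 1, u 0 ⨯₃ u 2, u 1 ⨯₃ u 2])
    (by rw [det_of_cross_pairs]; exact pow_ne_zero 2 hu) ?_
  ext k
  fin_cases k <;> simp [Matrix.mulVec, dotProduct_comm _ w, h]

theorem eq_zero_of_forall_add_cross_dotProduct_sub_eq_zero {v : Fin 4 → Fin 3 → R} (hv0 : v 0 = 0)
    (hv : (Matrix.of fun i : Fin 3 => v i.succ).det ≠ 0) {a b : Fin 3 → R}
    (hE : ∀ i j, (a + b ⨯₃ v i) ⬝ᵥ (v j - v i) = 0) : a = 0 ∧ b = 0 := by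
  have ha : ∀ j, a ⬝ᵥ v j = 0 := fun j => by simpa [hv0] using hE 0 j
  have hb : b = 0 := eq_zero_of_forall_dotProduct_cross_eq_zero hv fun i j => by
    simpa [ha] using (dotProduct_sub_of_add_cross a b _ _).symm.trans (hE i.succ j.succ)
  refine ⟨Matrix.eq_zero_of_mulVec_eq_zero hv (funext fun i => ?_), hb⟩
  simpa [Matrix.mulVec, dotProduct_comm] using ha i.succ

end CommRing

theorem integral_add_cross_dotProduct (a b x d : Fin 3 → ℝ) :
    ∫ t in (0 : ℝ)..1, (a + b ⨯₃ (x + t • d)) ⬝ᵥ d = (a + b ⨯₃ x) ⬝ᵥ d := by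
  have hconst : ∀ t : ℝ, (a + b ⨯₃ (x + t • d)) ⬝ᵥ d = (a + b ⨯₃ x) ⬝ᵥ d := fun t => by
    rw [map_add, map_smul, ← add_assoc, add_dotProduct, smul_dotProduct,
      dotProduct_comm (b ⨯₃ d) d, dot_cross_self, smul_zero, add_zero]
  simp only [hconst]
  simp

/-- A vector field of the form `p(x) = a + b × x` is uniquely determined
by the line integrals of its tangential components along the six edges of a
non-degenerate tetrahedron: if all edge integrals `σ(p, e_{ij})` vanish, then `p = 0`
(i.e. `a = 0` and `b = 0`). -/
theorem nedelec_edge_dofs_unisolvent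
    (v : Fin 4 → (Fin 3 → ℝ)) (hv : AffineIndependent ℝ v)
    (a b : Fin 3 → ℝ)
    (p : (Fin 3 → ℝ) → (Fin 3 → ℝ)) (hp : ∀ x, p x = a + crossProduct b x)
    (hσ : ∀ i j : Fin 4, i ≠ j →
      (∫ t in (0:ℝ)..1, (p (v i + t • (v j - v i))) ⬝ᵥ (v j - v i)) = 0) :
    a = 0 ∧ b = 0 := by
  obtain rfl : p = fun x => a + b ⨯₃ x := funext hp
  have hE : ∀ i j, (a + b ⨯₃ v i) ⬝ᵥ (v j - v i) = 0 := fun i j => by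
    rcases eq_or_ne i j with rfl | hij
    · simp
    · rw [← integral_add_cross_dotProduct]
      exact hσ i j hij
  have hdet : (Matrix.of fun i : Fin 3 => v i.succ - v 0).det ≠ 0 :=
    ((Matrix.isUnit_iff_isUnit_det _).mp
      (Matrix.linearIndependent_rows_iff_isUnit.mp hv.linearIndependent_succ_sub)).ne_zero
  obtain ⟨ha, rfl⟩ := eq_zero_of_forall_add_cross_dotProduct_sub_eq_zero (v := fun i => v i - v 0)
    (a := a + b ⨯₃ v 0) (b := b) (sub_self _) hdet fun i j => by
      simpa only [map_sub, add_add_sub_cancel, sub_sub_sub_cancel_right] using hE i j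
  simpa using ha
end
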